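/- arXiv:2001.11809 — 6 statements merged into one kernel-verified Lean document; each statement's English description precedes it below -/
import Mathlib

section
/- Let P be an invertible row-stochastic X×X matrix, B an X×Y column-full-rank row-stochastic matrix with columns b_1,...,b_Y, and α_1,...,α_Y > 0 unknown scalars. Define V_y = α_y diag(b_y) P^T and S = Σ_y V_y^T. Then S is invertible and P = S diag(S^{-1} 𝟙). -/
open Matrix

/-- Reconstruction of the transition matrix: given `V y = α y · diag(b_y) Pᵀ` with
`α y > 0` unknown, `P` invertible row-stochastic with positive entries and `B`
row-stochastic with positive entries and full column rank, the matrix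
`S = ∑ y, V yᵀ` is invertible and `P = S diag(S⁻¹ 𝟙)`. -/
theorem reconstruct_P_from_nullspaces {X Y : ℕ}
    (P : Matrix (Fin X) (Fin X) ℝ) (B : Matrix (Fin X) (Fin Y) ℝ)
    (hPpos : ∀ i j, 0 < P i j) (hProw : P.mulVec (fun _ => (1 : ℝ)) = fun _ => 1)
    (hPinv : IsUnit P.det)
    (hBpos : ∀ i y, 0 < B i y) (hBrow : B.mulVec (fun _ => (1 : ℝ)) = fun _ => 1)
    (hBrank : B.rank = Y)
    (α : Fin Y → ℝ) (hα : ∀ y, 0 < α y)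
    (V : Fin Y → Matrix (Fin X) (Fin X) ℝ)
    (hV : ∀ y, V y = α y • (Matrix.diagonal (fun i => B i y) * Pᵀ))
    (S : Matrix (Fin X) (Fin X) ℝ) (hS : S = ∑ y, (V y)ᵀ) :
    IsUnit S.det ∧ P = S * Matrix.diagonal (S⁻¹.mulVec (fun _ => (1 : ℝ))) := by
  set c : Fin X → ℝ := fun i => ∑ y, α y * B i y with hc
  -- positivity of c
  have hcpos : ∀ i, 0 < c i := by
    intro i
    have hne : (Finset.univ : Finset (Fin Y)).Nonempty := by
      by_contra h
      have := congrFun hBrow i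
      simp only [Matrix.mulVec, dotProduct] at this
      rw [Finset.not_nonempty_iff_eq_empty.mp h] at this
      simp at this
    exact Finset.sum_pos (fun y _ => mul_pos (hα y) (hBpos i y)) hne
  have hcne : ∀ i, c i ≠ 0 := fun i => (hcpos i).ne'
  -- S = P * diagonal c
  have hScd : S = P * Matrix.diagonal c := by
    ext i j
    rw [hS, Matrix.mul_diagonal]
    simp only [Matrix.sum_apply, hV, Matrix.transpose_apply, Matrix.smul_apply,
      smul_eq_mul, Matrix.diagonal_mul]
    rw [hc, Finset.mul_sum]
    exact Finset.sum_congr rfl (fun y _ => by ring)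
  have hdetd : IsUnit (Matrix.diagonal c).det := by
    rw [Matrix.det_diagonal]
    exact isUnit_iff_ne_zero.mpr (Finset.prod_ne_zero_iff.mpr (fun i _ => hcne i))
  have hSdet : IsUnit S.det := by
    rw [hScd, Matrix.det_mul]
    exact hPinv.mul hdetd
  refine ⟨hSdet, ?_⟩
  -- P⁻¹ 𝟙 = 𝟙
  have h1 : P⁻¹.mulVec (fun _ => (1 : ℝ)) = fun _ => 1 := by
    conv_lhs => rw [← hProw]
    rw [Matrix.mulVec_mulVec, Matrix.nonsing_inv_mul P hPinv, Matrix.one_mulVec]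
  -- S⁻¹ 𝟙 = c⁻¹
  have hSinv : S⁻¹ = (Matrix.diagonal c)⁻¹ * P⁻¹ := by
    rw [hScd, Matrix.mul_inv_rev]
  have hdinv : (Matrix.diagonal c)⁻¹ = Matrix.diagonal (fun i => (c i)⁻¹) := by
    apply Matrix.inv_eq_right_inv
    rw [Matrix.diagonal_mul_diagonal]
    have : (fun i => c i * (c i)⁻¹) = fun _ : Fin X => (1 : ℝ) := by
      ext i; exact mul_inv_cancel₀ (hcne i)
    rw [this, Matrix.diagonal_one]
  have hSone : S⁻¹.mulVec (fun _ => (1 : ℝ)) = fun i => (c i)⁻¹ := by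
    rw [hSinv, ← Matrix.mulVec_mulVec, h1, hdinv]
    ext i
    simp [Matrix.mulVec_diagonal]
  rw [hSone, hScd, Matrix.mul_assoc, Matrix.diagonal_mul_diagonal]
  have : (fun i => c i * (c i)⁻¹) = fun _ : Fin X => (1 : ℝ) := by
    ext i; exact mul_inv_cancel₀ (hcne i)
  rw [this, Matrix.diagonal_one, Matrix.mul_one]
end

section
/- Under the same setup, defining B̄ as the matrix with columns V_y P^{-T} 𝟙 for y = 1,...,Y, it holds that B̄ = B diag(α) where α = (α_1,...,α_Y)^T, and consequently B = B̄ diag(B̄† 𝟙), where B̄† is the Moore–Penrose pseudoinverse. -/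
open Matrix

/-- The Moore–Penrose pseudoinverse of a full-column-rank matrix:
`M† = (Mᵀ M)⁻¹ Mᵀ`. -/
noncomputable def pinv {m n : ℕ} (M : Matrix (Fin m) (Fin n) ℝ) :
    Matrix (Fin n) (Fin m) ℝ :=
  (Mᵀ * M)⁻¹ * Mᵀ

lemma isUnit_of_rank_eq_card {n : ℕ} (M : Matrix (Fin n) (Fin n) ℝ) (h : M.rank = n) :
    IsUnit M := by
  rw [← Matrix.mulVec_injective_iff_isUnit]
  have hsurj : Function.Surjective M.mulVecLin := by
    rw [← LinearMap.range_eq_top]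
    apply Submodule.eq_top_of_finrank_eq
    rw [← Matrix.rank, h]
    simp [Module.finrank_pi]
  have hinj : Function.Injective M.mulVecLin :=
    (LinearMap.injective_iff_surjective).mpr hsurj
  exact hinj

/-- Reconstruction of the observation matrix: with `V y = α y · diag(b_y) Pᵀ`, the matrix
`B̄` with columns `V y P⁻ᵀ 𝟙` satisfies `B̄ = B diag(α)`, and consequently
`B = B̄ diag(B̄† 𝟙)`. -/
theorem reconstruct_B_from_nullspaces {X Y : ℕ}
    (P : Matrix (Fin X) (Fin X) ℝ) (B : Matrix (Fin X) (Fin Y) ℝ)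
    (hPpos : ∀ i j, 0 < P i j) (hProw : P.mulVec (fun _ => (1 : ℝ)) = fun _ => 1)
    (hPinv : IsUnit P.det)
    (hBpos : ∀ i y, 0 < B i y) (hBrow : B.mulVec (fun _ => (1 : ℝ)) = fun _ => 1)
    (hBrank : B.rank = Y)
    (α : Fin Y → ℝ) (hα : ∀ y, 0 < α y)
    (V : Fin Y → Matrix (Fin X) (Fin X) ℝ)
    (hV : ∀ y, V y = α y • (Matrix.diagonal (fun i => B i y) * Pᵀ))
    (Bbar : Matrix (Fin X) (Fin Y) ℝ)
    (hBbar : Bbar = Matrix.of fun i y => ((V y).mulVec ((Pᵀ)⁻¹.mulVec (fun _ => (1 : ℝ)))) i) :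
    Bbar = B * Matrix.diagonal α ∧
      B = Bbar * Matrix.diagonal ((pinv Bbar).mulVec (fun _ => (1 : ℝ))) := by
  have hPTdet : IsUnit (Pᵀ).det := by rwa [Matrix.det_transpose]
  have hPT : Pᵀ * (Pᵀ)⁻¹ = 1 := Matrix.mul_nonsing_inv _ hPTdet
  have h1 : Bbar = B * Matrix.diagonal α := by
    subst hBbar
    ext i y
    simp only [Matrix.of_apply]
    rw [hV y, Matrix.smul_mulVec, Matrix.mulVec_mulVec, Matrix.mul_assoc, hPT,
      Matrix.mul_one]
    simp [Matrix.mulVec_diagonal, Matrix.mul_diagonal, mul_comm]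
  refine ⟨h1, ?_⟩
  -- abbreviations
  set D := Matrix.diagonal α with hD
  have hDdet : IsUnit D.det := by
    rw [hD, Matrix.det_diagonal]
    exact isUnit_iff_ne_zero.mpr (Finset.prod_ne_zero_iff.mpr fun y _ => (hα y).ne')
  have hBtB : IsUnit (Bᵀ * B) := by
    apply isUnit_of_rank_eq_card
    rw [Matrix.rank_transpose_mul_self, hBrank]
  have hBtBdet : IsUnit (Bᵀ * B).det := (Matrix.isUnit_iff_isUnit_det _).mp hBtB
  -- compute Bbarᵀ * Bbar
  have hDT : Dᵀ = D := Matrix.diagonal_transpose α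
  have hBB : Bbarᵀ * Bbar = D * (Bᵀ * B) * D := by
    rw [h1, Matrix.transpose_mul, hDT]
    simp only [Matrix.mul_assoc]
  -- pinv Bbar = D⁻¹ * (BᵀB)⁻¹ * Bᵀ
  have hDinv : D * D⁻¹ = 1 := Matrix.mul_nonsing_inv _ hDdet
  have hDinv' : D⁻¹ * D = 1 := Matrix.nonsing_inv_mul _ hDdet
  have hBbarT : Bbarᵀ = D * Bᵀ := by rw [h1, Matrix.transpose_mul, hDT]
  have hpinv : pinv Bbar = D⁻¹ * ((Bᵀ * B)⁻¹ * Bᵀ) := by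
    rw [pinv, hBB, hBbarT, Matrix.mul_inv_rev, Matrix.mul_inv_rev]
    simp only [Matrix.mul_assoc]
    rw [← Matrix.mul_assoc D⁻¹ D, hDinv', Matrix.one_mul]
  -- pinv Bbar 𝟙 = α⁻¹
  have hBtBinv : (Bᵀ * B)⁻¹ * (Bᵀ * B) = 1 := Matrix.nonsing_inv_mul _ hBtBdet
  have hcancel : D⁻¹ * ((Bᵀ * B)⁻¹ * Bᵀ) * B = D⁻¹ := by
    rw [Matrix.mul_assoc, Matrix.mul_assoc, hBtBinv, Matrix.mul_one]
  have hvec : (pinv Bbar).mulVec (fun _ => (1 : ℝ)) = fun y => (α y)⁻¹ := by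
    have hDinvEq : D⁻¹ = Matrix.diagonal (fun y => (α y)⁻¹) := by
      apply Matrix.inv_eq_right_inv
      rw [hD, Matrix.diagonal_mul_diagonal]
      convert Matrix.diagonal_one using 2
      exact funext fun y => mul_inv_cancel₀ (hα y).ne'
    rw [hpinv, ← hBrow, Matrix.mulVec_mulVec, hcancel, hDinvEq]
    ext y
    simp [Matrix.mulVec_diagonal]
  rw [hvec, h1, Matrix.mul_assoc, hD, Matrix.diagonal_mul_diagonal]
  have : (fun y => α y * (α y)⁻¹) = fun _ : Fin Y => (1 : ℝ) := by
    funext y; exact mul_inv_cancel₀ (hα y).ne'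
  rw [this, Matrix.diagonal_one, Matrix.mul_one]
end

section
/- Identifiability of the HMM filter: let (P, B) and (P̃, B̃) be two HMMs with strictly positive entries and full-column-rank transition and observation matrices. If for every observation y and every probability vector π on the simplex, T(π, y; P, B) = T(π, y; P̃, B̃), where T(π, y; P, B) = diag(b_y) P^T π / (𝟙^T diag(b_y) P^T π), then P = P̃ and B = B̃. -/
open Matrix

/-- The HMM filter update `T(π, y; P, B) = diag(b_y) Pᵀ π / (𝟙ᵀ diag(b_y) Pᵀ π)`. -/
noncomputable def hmmT {X Y : ℕ} (P : Matrix (Fin X) (Fin X) ℝ)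
    (B : Matrix (Fin X) (Fin Y) ℝ) (y : Fin Y) (π : Fin X → ℝ) : Fin X → ℝ :=
  (∑ i, ((Matrix.diagonal (fun i => B i y) * Pᵀ).mulVec π) i)⁻¹ •
    (Matrix.diagonal (fun i => B i y) * Pᵀ).mulVec π

/-- Identifiability of the HMM filter: if two HMMs with strictly positive entries,
row-stochastic, full-column-rank parameter matrices produce the same filter update for
every observation `y` and every probability vector `π` on the simplex, then the
parameters coincide. -/
theorem hmm_filter_identifiable {X Y : ℕ}
    (P Pt : Matrix (Fin X) (Fin X) ℝ) (B Bt : Matrix (Fin X) (Fin Y) ℝ)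
    (hPpos : ∀ i j, 0 < P i j) (hProw : P.mulVec (fun _ => (1 : ℝ)) = fun _ => 1)
    (hPinv : IsUnit P.det)
    (hPtpos : ∀ i j, 0 < Pt i j) (hPtrow : Pt.mulVec (fun _ => (1 : ℝ)) = fun _ => 1)
    (hPtinv : IsUnit Pt.det)
    (hBpos : ∀ i y, 0 < B i y) (hBrow : B.mulVec (fun _ => (1 : ℝ)) = fun _ => 1)
    (hBrank : B.rank = Y)
    (hBtpos : ∀ i y, 0 < Bt i y) (hBtrow : Bt.mulVec (fun _ => (1 : ℝ)) = fun _ => 1)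
    (hBtrank : Bt.rank = Y)
    (heq : ∀ (y : Fin Y) (π : Fin X → ℝ), (∀ i, 0 ≤ π i) → ∑ i, π i = 1 →
      hmmT P B y π = hmmT Pt Bt y π) :
    P = Pt ∧ B = Bt := by
  rcases Nat.eq_zero_or_pos X with hX | hX
  · subst hX
    exact ⟨by ext i j; exact i.elim0, by ext i j; exact i.elim0⟩
  haveI : Nonempty (Fin X) := Fin.pos_iff_nonempty.mp hX
  -- computed form of hmmT
  have hT : ∀ (Q : Matrix (Fin X) (Fin X) ℝ) (C : Matrix (Fin X) (Fin Y) ℝ)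
      (y : Fin Y) (π : Fin X → ℝ) (i : Fin X),
      hmmT Q C y π i = (∑ i', C i' y * ∑ k, Q k i' * π k)⁻¹ * (C i y * ∑ k, Q k i * π k) := by
    intro Q C y π i
    have hm : ∀ i', ((Matrix.diagonal (fun i => C i y) * Qᵀ).mulVec π) i'
        = C i' y * ∑ k, Q k i' * π k := by
      intro i'
      simp [Matrix.mulVec, dotProduct, Matrix.diagonal_mul, Matrix.transpose_apply,
        Finset.mul_sum, mul_assoc]
    simp only [hmmT, Pi.smul_apply, smul_eq_mul, hm]
  -- positivity of predicted vector
  have hw : ∀ (Q : Matrix (Fin X) (Fin X) ℝ), (∀ i j, 0 < Q i j) →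
      ∀ (π : Fin X → ℝ), (∀ i, 0 ≤ π i) → ∑ i, π i = 1 →
      ∀ i, 0 < ∑ k, Q k i * π k := by
    intro Q hQ π hπ hπ1 i
    obtain ⟨k, -, hk⟩ := Finset.exists_ne_zero_of_sum_ne_zero (by rw [hπ1]; norm_num :
      ∑ i, π i ≠ 0)
    refine Finset.sum_pos' (fun l _ => mul_nonneg (hQ l i).le (hπ l)) ⟨k, Finset.mem_univ k, ?_⟩
    exact mul_pos (hQ k i) (lt_of_le_of_ne (hπ k) (Ne.symm hk))
  -- row sums
  have hProw' : ∀ j, ∑ i, P j i = 1 := by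
    intro j; simpa [Matrix.mulVec, dotProduct] using congrFun hProw j
  have hPtrow' : ∀ j, ∑ i, Pt j i = 1 := by
    intro j; simpa [Matrix.mulVec, dotProduct] using congrFun hPtrow j
  have hBrow' : ∀ i, ∑ y, B i y = 1 := by
    intro i; simpa [Matrix.mulVec, dotProduct] using congrFun hBrow i
  have hBtrow' : ∀ i, ∑ y, Bt i y = 1 := by
    intro i; simpa [Matrix.mulVec, dotProduct] using congrFun hBtrow i
  -- cross-multiplied equality for any simplex point
  have key : ∀ (y : Fin Y) (π : Fin X → ℝ), (∀ i, 0 ≤ π i) → ∑ i, π i = 1 → ∀ i,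
      (∑ i', Bt i' y * ∑ k, Pt k i' * π k) * (B i y * ∑ k, P k i * π k)
      = (∑ i', B i' y * ∑ k, P k i' * π k) * (Bt i y * ∑ k, Pt k i * π k) := by
    intro y π hπ hπ1 i
    have h := congrFun (heq y π hπ hπ1) i
    rw [hT, hT] at h
    have hs : 0 < ∑ i', B i' y * ∑ k, P k i' * π k :=
      Finset.sum_pos (fun l _ => mul_pos (hBpos l y) (hw P hPpos π hπ hπ1 l)) Finset.univ_nonempty
    have hst : 0 < ∑ i', Bt i' y * ∑ k, Pt k i' * π k :=
      Finset.sum_pos (fun l _ => mul_pos (hBtpos l y) (hw Pt hPtpos π hπ hπ1 l)) Finset.univ_nonempty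
    field_simp at h
    linarith [h]

  -- E1: via point masses
  set s : Fin X → Fin Y → ℝ := fun j y => ∑ i, B i y * P j i with hs_def
  set st : Fin X → Fin Y → ℝ := fun j y => ∑ i, Bt i y * Pt j i with hst_def
  have hs_pos : ∀ j y, 0 < s j y :=
    fun j y => Finset.sum_pos (fun l _ => mul_pos (hBpos l y) (hPpos j l)) Finset.univ_nonempty
  have hst_pos : ∀ j y, 0 < st j y :=
    fun j y => Finset.sum_pos (fun l _ => mul_pos (hBtpos l y) (hPtpos j l)) Finset.univ_nonempty
  have hind : ∀ (Q : Matrix (Fin X) (Fin X) ℝ) (j i : Fin X),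
      ∑ k, Q k i * (if k = j then (1:ℝ) else 0) = Q j i := by
    intro Q j i
    simp [mul_ite, Finset.sum_ite_eq']
  have E1 : ∀ (j : Fin X) (y : Fin Y) (i : Fin X),
      st j y * (B i y * P j i) = s j y * (Bt i y * Pt j i) := by
    intro j y i
    have h := key y (fun l => if l = j then 1 else 0)
      (fun l => by by_cases h : l = j <;> simp [h]) (by simp [Finset.sum_ite_eq']) i
    simpa [hind] using h
  -- E3: via mixtures of two point masses
  have hmix : ∀ (Q : Matrix (Fin X) (Fin X) ℝ) (j k i : Fin X),
      ∑ l, Q l i * ((if l = j then (2:ℝ)⁻¹ else 0) + (if l = k then (2:ℝ)⁻¹ else 0))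
        = Q j i * 2⁻¹ + Q k i * 2⁻¹ := by
    intro Q j k i
    simp [mul_add, Finset.sum_add_distrib, mul_ite, Finset.sum_ite_eq']
  have hmixsum : ∀ (C : Matrix (Fin X) (Fin Y) ℝ) (Q : Matrix (Fin X) (Fin X) ℝ)
      (j k : Fin X) (y : Fin Y),
      ∑ i', C i' y * (Q j i' * 2⁻¹ + Q k i' * 2⁻¹)
        = (∑ i', C i' y * Q j i') * 2⁻¹ + (∑ i', C i' y * Q k i') * 2⁻¹ := by
    intro C Q j k y
    calc ∑ i', C i' y * (Q j i' * 2⁻¹ + Q k i' * 2⁻¹)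
        = ∑ i', (C i' y * Q j i' * 2⁻¹ + C i' y * Q k i' * 2⁻¹) :=
          Finset.sum_congr rfl (fun l _ => by ring)
      _ = _ := by rw [Finset.sum_add_distrib, ← Finset.sum_mul, ← Finset.sum_mul]
  have E3 : ∀ (j k : Fin X), j ≠ k → ∀ (y : Fin Y) (i : Fin X),
      (st j y + st k y) * (B i y * (P j i + P k i))
        = (s j y + s k y) * (Bt i y * (Pt j i + Pt k i)) := by
    intro j k hjk y i
    have h := key y (fun l => (if l = j then 2⁻¹ else 0) + (if l = k then 2⁻¹ else 0))
      (fun l => by positivity)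
      (by simp [Finset.sum_add_distrib, Finset.sum_ite_eq', if_neg hjk]; norm_num) i
    simp only [hmix] at h
    rw [hmixsum, hmixsum] at h
    rw [hs_def, hst_def]
    linear_combination 4 * h
  -- the proportionality constant is independent of the starting point
  have cc : ∀ (j k : Fin X) (y : Fin Y), st k y * s j y = st j y * s k y := by
    intro j k y
    rcases eq_or_ne j k with rfl | hjk
    · ring
    by_contra hD0
    set D : ℝ := st k y * s j y - st j y * s k y with hD_def
    have hD : D ≠ 0 := sub_ne_zero_of_ne hD0
    have h4 : ∀ i, Bt i y * (st k y * D * Pt j i) = Bt i y * (st j y * D * Pt k i) := by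
      intro i
      have g1 := E1 j y i
      have g2 := E1 k y i
      have g3 := E3 j k hjk y i
      rw [hD_def]
      linear_combination (st j y * st k y) * g3 - (st k y * (st j y + st k y)) * g1
        - (st j y * (st j y + st k y)) * g2
    have h5 : ∀ i, st k y * D * Pt j i = st j y * D * Pt k i :=
      fun i => mul_left_cancel₀ (hBtpos i y).ne' (h4 i)
    have h6 : st k y * D = st j y * D := by
      have h := Finset.sum_congr rfl (fun i (_ : i ∈ Finset.univ) => h5 i)
      rwa [← Finset.mul_sum, ← Finset.mul_sum, hPtrow' j, hPtrow' k, mul_one, mul_one] at h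
    have h7 : st k y = st j y := mul_right_cancel₀ hD h6
    have h8 : Pt j = Pt k := by
      funext i
      have := h5 i
      rw [h7] at this
      exact mul_left_cancel₀ (mul_ne_zero (hst_pos j y).ne' hD) this
    exact (hPtinv.ne_zero) (Matrix.det_zero_of_row_eq hjk h8)
  -- define the constant c_y
  set j0 : Fin X := ⟨0, hX⟩ with hj0
  set cv : Fin Y → ℝ := fun y => s j0 y / st j0 y with hcv_def
  have hc : ∀ (i j : Fin X) (y : Fin Y), B i y * P j i = cv y * (Bt i y * Pt j i) := by
    intro i j y
    have h1 := E1 j y i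
    have h2 := cc j j0 y
    rw [hcv_def]
    rw [div_mul_eq_mul_div, eq_div_iff (hst_pos j0 y).ne']
    -- goal : (B i y * P j i) * st j0 y = s j0 y * (Bt i y * Pt j i)
    have h3 : st j y * ((B i y * P j i) * st j0 y) = st j y * (s j0 y * (Bt i y * Pt j i)) := by
      linear_combination st j0 y * h1 + (Bt i y * Pt j i) * h2
    exact mul_left_cancel₀ (hst_pos j y).ne' h3
  -- P = Pt
  have hg : ∀ (j i : Fin X), P j i = Pt j i * (∑ y, cv y * Bt i y) := by
    intro j i
    calc P j i = (∑ y, B i y) * P j i := by rw [hBrow' i, one_mul]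
    _ = ∑ y, B i y * P j i := by rw [Finset.sum_mul]
    _ = ∑ y, cv y * (Bt i y * Pt j i) := Finset.sum_congr rfl (fun y _ => hc i j y)
    _ = Pt j i * (∑ y, cv y * Bt i y) := by rw [Finset.mul_sum]; exact Finset.sum_congr rfl (fun y _ => by ring)
  have hPtinj : Function.Injective Pt.mulVec :=
    Matrix.mulVec_injective_iff_isUnit.mpr ((Matrix.isUnit_iff_isUnit_det Pt).mpr hPtinv)
  have hgv : (fun i => ∑ y, cv y * Bt i y) = fun _ => (1:ℝ) := by
    apply hPtinj
    funext j
    show ∑ i, Pt j i * (∑ y, cv y * Bt i y) = ∑ i, Pt j i * 1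
    calc ∑ i, Pt j i * (∑ y, cv y * Bt i y) = ∑ i, P j i :=
          Finset.sum_congr rfl (fun i _ => (hg j i).symm)
    _ = 1 := hProw' j
    _ = ∑ i, Pt j i * 1 := by simp [hPtrow' j]
  have hPP : P = Pt := by
    ext j i
    rw [hg j i, congrFun hgv i, mul_one]
  refine ⟨hPP, ?_⟩
  -- B = Bt
  have hBc : ∀ (i : Fin X) (y : Fin Y), B i y = cv y * Bt i y := by
    intro i y
    have h := hc i j0 y
    rw [← hPP] at h
    have h' : B i y * P j0 i = (cv y * Bt i y) * P j0 i := by linarith [h]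
    exact mul_right_cancel₀ (hPpos j0 i).ne' h'
  have hcv1 : ∀ i, ∑ y, Bt i y * cv y = ∑ y, Bt i y * 1 := by
    intro i
    calc ∑ y, Bt i y * cv y = ∑ y, B i y := Finset.sum_congr rfl (fun y _ => by rw [hBc i y]; ring)
    _ = 1 := hBrow' i
    _ = ∑ y, Bt i y * 1 := by simp [hBtrow' i]
  have hBtinj : Function.Injective Bt.mulVecLin := by
    rw [← LinearMap.ker_eq_bot]
    have h1 := LinearMap.finrank_range_add_finrank_ker (Bt.mulVecLin)
    have h2 : Module.finrank ℝ (LinearMap.range Bt.mulVecLin) = Y := hBtrank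
    rw [h2, Module.finrank_fin_fun (R := ℝ)] at h1
    have h3 : Module.finrank ℝ (LinearMap.ker Bt.mulVecLin) = 0 := by omega
    exact Submodule.finrank_eq_zero.mp h3
  have hcv : cv = fun _ => (1:ℝ) := by
    apply hBtinj
    show Bt.mulVec cv = Bt.mulVec (fun _ => 1)
    funext i
    simpa [Matrix.mulVec, dotProduct] using hcv1 i
  ext i y
  rw [hBc i y, congrFun hcv y, one_mul]
end

section
/- Identifiability on a finite subset: let (P, B) and (P̃, B̃) be two HMMs satisfying positivity and full-column-rank assumptions. Suppose for each observation y there is a set Δ_y = {π_1^y,...,π_X^y, π_{X+1}^y} ⊂ Δ of X+1 probability vectors such that π_1^y,...,π_X^y are linearly independent and π_{X+1}^y = Σ_i β_i π_i^y with all β_i ≠ 0. If T(π, y; P, B) = T(π, y; P̃, B̃) for all π ∈ Δ_y and all y, then P = P̃ and B = B̃. -/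
open Matrix

/-! Write `M_y = diag(b_y) Pᵀ`, so that `T(·, y; P, B)` is `π ↦ M_y π` normalised. Positivity
makes the normaliser nonzero on the simplex, so agreement of the two filters at `π` says that
`M_y π` is a multiple of `M̃_y π`. As `M̃_y` is invertible and the `π_i^y` form a basis, the
multiples at the `π_i^y` and at `π_{X+1}^y`, whose coordinates `β_i` are all nonzero, must
coincide: `M_y = c_y M̃_y`, i.e. `b_{iy} p_{ji} = c_y b̃_{iy} p̃_{ji}`. Summing over `y` shows
that `P` is `P̃` with rescaled columns, and since both are row-stochastic and `P̃` is
invertible the scaling is trivial. Then `B` is `B̃` with its columns scaled by `c`, and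
row-stochasticity together with the full column rank of `B̃` gives `c = 1`. -/

lemma eq_smul_of_inv_smul_eq {K V : Type*} [Field K] [AddCommGroup V] [Module K V]
    {a b : K} {u w : V} (ha : a ≠ 0) (h : a⁻¹ • u = b⁻¹ • w) : u = (a * b⁻¹) • w := by
  rw [← smul_smul, ← h, smul_smul, mul_inv_cancel₀ ha, one_smul]

theorem Module.Basis.eq_smul_of_apply_eq_smul {ι K V W : Type*} [Fintype ι] [Field K]
    [AddCommGroup V] [Module K V] [AddCommGroup W] [Module K W] (b : Basis ι K V)
    {f g : V →ₗ[K] W} (hg : Function.Injective g) {c β : ι → K} {d : K}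
    (hc : ∀ i, f (b i) = c i • g (b i)) (hβ : ∀ i, β i ≠ 0)
    (hd : f (∑ i, β i • b i) = d • g (∑ i, β i • b i)) : f = d • g := by
  have hli : LinearIndependent K (g ∘ b) :=
    b.linearIndependent.map' g (LinearMap.ker_eq_bot.mpr hg)
  have hsum : ∑ i, (β i * c i - d * β i) • g (b i) = 0 :=
    calc _ = f (∑ i, β i • b i) - d • g (∑ i, β i • b i) := by
          simp only [sub_smul, Finset.sum_sub_distrib, map_sum, map_smul, hc, smul_smul,
            Finset.smul_sum]
      _ = 0 := sub_eq_zero.mpr hd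
  have hcd : ∀ i, c i = d := fun i =>
    mul_left_cancel₀ (hβ i) (by linear_combination Fintype.linearIndependent_iff.mp hli _ hsum i)
  exact b.ext fun i => by rw [hc, LinearMap.smul_apply, hcd]

theorem Matrix.mulVec_injective_of_rank_eq_card {m n K : Type*} [Fintype n] [Field K]
    {A : Matrix m n K} (h : A.rank = Fintype.card n) : Function.Injective A.mulVec := by
  rw [mulVec_injective_iff, linearIndependent_iff_card_eq_finrank_span, Set.finrank,
    ← rank_eq_finrank_span_cols, h]

theorem Matrix.eq_of_eq_mul_diagonal {m n R : Type*} [Fintype n] [DecidableEq n]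
    [Semiring R] {A A' : Matrix m n R} {s : n → R} (hA : A = A' * diagonal s)
    (hinj : Function.Injective A'.mulVec) (h1 : A *ᵥ 1 = A' *ᵥ 1) : A = A' := by
  have hs : s = 1 := hinj <| by
    rw [← h1, hA, ← mulVec_mulVec]
    congr 1
    ext i
    rw [mulVec_diagonal, Pi.one_apply, mul_one]
  simp only [hA, hs, Pi.one_def, diagonal_one, Matrix.mul_one]

theorem Matrix.mulVec_pos_of_mem_stdSimplex {m n : Type*} [Fintype n] {A : Matrix m n ℝ}
    (hA : ∀ i j, 0 < A i j) {v : n → ℝ} (hv : v ∈ stdSimplex ℝ n) (i : m) :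
    0 < (A *ᵥ v) i := by
  obtain ⟨j, hj⟩ : ∃ j, 0 < v j := by
    by_contra! h
    linarith [hv.2, Finset.sum_nonpos (s := Finset.univ) fun j _ => h j]
  exact Finset.sum_pos' (fun k _ => mul_nonneg (hA i k).le (hv.1 k))
    ⟨j, Finset.mem_univ _, mul_pos (hA i j) hj⟩

section HMM

variable {ι κ : Type*} [Fintype ι] [DecidableEq ι]

noncomputable def hmmFilterMatrix (P : Matrix ι ι ℝ) (B : Matrix ι κ ℝ) (y : κ) :
    Matrix ι ι ℝ :=
  diagonal (fun i => B i y) * Pᵀ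

theorem hmmFilterMatrix_apply (P : Matrix ι ι ℝ) (B : Matrix ι κ ℝ) (y : κ) (i j : ι) :
    hmmFilterMatrix P B y i j = B i y * P j i := by
  rw [hmmFilterMatrix, diagonal_mul, transpose_apply]

theorem isUnit_hmmFilterMatrix {P : Matrix ι ι ℝ} {B : Matrix ι κ ℝ} {y : κ} (hP : IsUnit P)
    (hB : ∀ i, B i y ≠ 0) : IsUnit (hmmFilterMatrix P B y) :=
  (isUnit_diagonal.mpr (Pi.isUnit_iff.mpr fun i => (hB i).isUnit)).mul
    ((isUnit_transpose P).mpr hP)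

theorem eq_mul_diagonal_of_hmmFilterMatrix_eq_smul {P P' : Matrix ι ι ℝ}
    [Fintype κ] {B B' : Matrix ι κ ℝ} {c : κ → ℝ}
    (hc : ∀ y, hmmFilterMatrix P B y = c y • hmmFilterMatrix P' B' y) (hB : B *ᵥ 1 = 1) :
    P = P' * diagonal (fun i => ∑ y, c y * B' i y) := by
  ext j i
  have hrow : ∑ y, B i y = 1 := by simpa [mulVec, dotProduct] using congrFun hB i
  calc P j i = ∑ y, B i y * P j i := by rw [← Finset.sum_mul, hrow, one_mul]
    _ = ∑ y, c y * (B' i y * P' j i) := Finset.sum_congr rfl fun y _ => by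
          simpa only [hmmFilterMatrix_apply, Matrix.smul_apply, smul_eq_mul] using
            congrFun (congrFun (hc y) i) j
    _ = (P' * diagonal (fun i => ∑ y, c y * B' i y)) j i := by
          rw [mul_diagonal, Finset.mul_sum]
          exact Finset.sum_congr rfl fun y _ => by ring

theorem eq_and_eq_of_hmmFilterMatrix_eq_smul {P P' : Matrix ι ι ℝ} [Fintype κ]
    [DecidableEq κ] {B B' : Matrix ι κ ℝ} {c : κ → ℝ}
    (hc : ∀ y, hmmFilterMatrix P B y = c y • hmmFilterMatrix P' B' y) (hP : ∀ i, P i i ≠ 0)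
    (hProw : P *ᵥ 1 = 1) (hP'row : P' *ᵥ 1 = 1) (hP' : Function.Injective P'.mulVec)
    (hBrow : B *ᵥ 1 = 1) (hB'row : B' *ᵥ 1 = 1) (hB' : Function.Injective B'.mulVec) :
    P = P' ∧ B = B' := by
  obtain rfl : P = P' := eq_of_eq_mul_diagonal
    (eq_mul_diagonal_of_hmmFilterMatrix_eq_smul hc hBrow) hP' (hProw.trans hP'row.symm)
  refine ⟨rfl, eq_of_eq_mul_diagonal (s := c) ?_ hB' (hBrow.trans hB'row.symm)⟩
  ext i y
  have hiiy := congrFun (congrFun (hc y) i) i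
  simp only [hmmFilterMatrix_apply, Matrix.smul_apply, smul_eq_mul] at hiiy
  rw [mul_diagonal]
  exact mul_right_cancel₀ (hP i) (by linear_combination hiiy)

end HMM

theorem hmmT_eq_inv_smul {X Y : ℕ} (P : Matrix (Fin X) (Fin X) ℝ)
    (B : Matrix (Fin X) (Fin Y) ℝ) (y : Fin Y) (π : Fin X → ℝ) :
    hmmT P B y π = (∑ i, (hmmFilterMatrix P B y *ᵥ π) i)⁻¹ • hmmFilterMatrix P B y *ᵥ π :=
  rfl

theorem exists_hmmFilterMatrix_mulVec_eq_smul {X Y : ℕ} {P P' : Matrix (Fin X) (Fin X) ℝ}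
    {B B' : Matrix (Fin X) (Fin Y) ℝ} {y : Fin Y} (hP : ∀ i j, 0 < P i j)
    (hB : ∀ i, 0 < B i y) {v : Fin X → ℝ} (hv : v ∈ stdSimplex ℝ (Fin X))
    (h : hmmT P B y v = hmmT P' B' y v) :
    ∃ c : ℝ, hmmFilterMatrix P B y *ᵥ v = c • hmmFilterMatrix P' B' y *ᵥ v := by
  have hpos := mulVec_pos_of_mem_stdSimplex (A := hmmFilterMatrix P B y)
    (fun i j => by rw [hmmFilterMatrix_apply]; exact mul_pos (hB i) (hP j i)) hv
  have hX : (Finset.univ : Finset (Fin X)).Nonempty :=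
    Finset.nonempty_of_sum_ne_zero (hv.2 ▸ one_ne_zero)
  rw [hmmT_eq_inv_smul, hmmT_eq_inv_smul] at h
  exact ⟨_, eq_smul_of_inv_smul_eq (Finset.sum_pos (fun i _ => hpos i) hX).ne' h⟩

theorem exists_hmmFilterMatrix_eq_smul {X Y : ℕ} {P P' : Matrix (Fin X) (Fin X) ℝ}
    {B B' : Matrix (Fin X) (Fin Y) ℝ} {y : Fin Y} (hP : ∀ i j, 0 < P i j)
    (hB : ∀ i, 0 < B i y) (hP' : IsUnit P') (hB' : ∀ i, B' i y ≠ 0)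
    {πs : Fin X → Fin X → ℝ} {πlast : Fin X → ℝ} {β : Fin X → ℝ}
    (hπs : ∀ i, πs i ∈ stdSimplex ℝ (Fin X)) (hπlast : πlast ∈ stdSimplex ℝ (Fin X))
    (hindep : LinearIndependent ℝ πs) (hβ : ∀ i, β i ≠ 0) (hcomb : πlast = ∑ i, β i • πs i)
    (heq : ∀ i, hmmT P B y (πs i) = hmmT P' B' y (πs i))
    (heqlast : hmmT P B y πlast = hmmT P' B' y πlast) :
    ∃ c : ℝ, hmmFilterMatrix P B y = c • hmmFilterMatrix P' B' y := by
  choose c hc using fun i => exists_hmmFilterMatrix_mulVec_eq_smul hP hB (hπs i) (heq i)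
  obtain ⟨d, hd⟩ := exists_hmmFilterMatrix_mulVec_eq_smul hP hB hπlast heqlast
  let b := basisOfLinearIndependentOfCardEqFinrank' πs hindep
    (Module.finrank_fintype_fun_eq_card ℝ).symm
  refine ⟨d, toLin'.injective ?_⟩
  rw [map_smul]
  refine b.eq_smul_of_apply_eq_smul
    (mulVec_injective_iff_isUnit.mpr (isUnit_hmmFilterMatrix hP' hB')) (c := c) ?_ hβ ?_
  · simpa [b] using hc
  · simpa [b, ← hcomb] using hd

theorem hmm_filter_identifiable_subset_general {X Y : ℕ}
    (P Pt : Matrix (Fin X) (Fin X) ℝ) (B Bt : Matrix (Fin X) (Fin Y) ℝ)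
    (hPpos : ∀ i j, 0 < P i j) (hProw : P.mulVec (fun _ => (1 : ℝ)) = fun _ => 1)
    (hPtrow : Pt.mulVec (fun _ => (1 : ℝ)) = fun _ => 1)
    (hPtinv : IsUnit Pt.det)
    (hBpos : ∀ i y, 0 < B i y) (hBrow : B.mulVec (fun _ => (1 : ℝ)) = fun _ => 1)
    (hBtpos : ∀ i y, 0 < Bt i y) (hBtrow : Bt.mulVec (fun _ => (1 : ℝ)) = fun _ => 1)
    (hBtrank : Bt.rank = Y)
    (πs : Fin Y → Fin X → (Fin X → ℝ)) (πlast : Fin Y → (Fin X → ℝ))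
    (β : Fin Y → Fin X → ℝ)
    (hπsimplex : ∀ y i, (∀ j, 0 ≤ πs y i j) ∧ ∑ j, πs y i j = 1)
    (hπlastsimplex : ∀ y, (∀ j, 0 ≤ πlast y j) ∧ ∑ j, πlast y j = 1)
    (hindep : ∀ y, LinearIndependent ℝ (πs y))
    (hβ : ∀ y i, β y i ≠ 0)
    (hcomb : ∀ y, πlast y = ∑ i, β y i • πs y i)
    (heq : ∀ y : Fin Y, (∀ i, hmmT P B y (πs y i) = hmmT Pt Bt y (πs y i)) ∧
      hmmT P B y (πlast y) = hmmT Pt Bt y (πlast y)) :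
    P = Pt ∧ B = Bt := by
  have hPt : IsUnit Pt := (isUnit_iff_isUnit_det Pt).mpr hPtinv
  choose c hc using fun y => exists_hmmFilterMatrix_eq_smul hPpos (hBpos · y) hPt
    (fun i => (hBtpos i y).ne') (hπsimplex y) (hπlastsimplex y) (hindep y) (hβ y) (hcomb y)
    (heq y).1 (heq y).2
  exact eq_and_eq_of_hmmFilterMatrix_eq_smul hc (fun i => (hPpos i i).ne') hProw hPtrow
    (mulVec_injective_iff_isUnit.mpr hPt) hBrow hBtrow
    (mulVec_injective_of_rank_eq_card (by rwa [Fintype.card_fin]))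

/-- Identifiability of the HMM filter from a finite set of posteriors: if for each
observation `y` there are `X` linearly independent probability vectors `πs y 0, …,
πs y (X-1)` on the simplex and one more probability vector `πlast y = ∑ i, β y i • πs y i`
with all coefficients nonzero, and the two filters agree on these `X + 1` vectors for
each `y`, then the parameters coincide. -/
theorem hmm_filter_identifiable_subset {X Y : ℕ}
    (P Pt : Matrix (Fin X) (Fin X) ℝ) (B Bt : Matrix (Fin X) (Fin Y) ℝ)
    (hPpos : ∀ i j, 0 < P i j) (hProw : P.mulVec (fun _ => (1 : ℝ)) = fun _ => 1)
    (hPinv : IsUnit P.det)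
    (hPtpos : ∀ i j, 0 < Pt i j) (hPtrow : Pt.mulVec (fun _ => (1 : ℝ)) = fun _ => 1)
    (hPtinv : IsUnit Pt.det)
    (hBpos : ∀ i y, 0 < B i y) (hBrow : B.mulVec (fun _ => (1 : ℝ)) = fun _ => 1)
    (hBrank : B.rank = Y)
    (hBtpos : ∀ i y, 0 < Bt i y) (hBtrow : Bt.mulVec (fun _ => (1 : ℝ)) = fun _ => 1)
    (hBtrank : Bt.rank = Y)
    (πs : Fin Y → Fin X → (Fin X → ℝ)) (πlast : Fin Y → (Fin X → ℝ))
    (β : Fin Y → Fin X → ℝ)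
    (hπsimplex : ∀ y i, (∀ j, 0 ≤ πs y i j) ∧ ∑ j, πs y i j = 1)
    (hπlastsimplex : ∀ y, (∀ j, 0 ≤ πlast y j) ∧ ∑ j, πlast y j = 1)
    (hindep : ∀ y, LinearIndependent ℝ (πs y))
    (hβ : ∀ y i, β y i ≠ 0)
    (hcomb : ∀ y, πlast y = ∑ i, β y i • πs y i)
    (heq : ∀ y : Fin Y, (∀ i, hmmT P B y (πs y i) = hmmT Pt Bt y (πs y i)) ∧
      hmmT P B y (πlast y) = hmmT Pt Bt y (πlast y)) :
    P = Pt ∧ B = Bt :=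
  hmm_filter_identifiable_subset_general P Pt B Bt hPpos hProw hPtrow hPtinv hBpos hBrow hBtpos
    hBtrow hBtrank πs πlast β hπsimplex hπlastsimplex hindep hβ hcomb heq
end

section
/- If P and B are strictly positive row-stochastic matrices and π is on the simplex, then the HMM filter map determines the observation uniquely: if T(π, y; P, B) = T(π, ỹ; P, B) for some probability vector π and B has full column rank, then y = ỹ. -/
open Matrix

/-- The HMM filter map determines the observation uniquely: for strictly positive
row-stochastic `P`, `B` with `B` of full column rank and `π` on the simplex,
`T(π, y; P, B) = T(π, ỹ; P, B)` implies `y = ỹ`. -/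
theorem hmm_filter_observation_unique {X Y : ℕ}
    (P : Matrix (Fin X) (Fin X) ℝ) (B : Matrix (Fin X) (Fin Y) ℝ)
    (hPpos : ∀ i j, 0 < P i j) (hProw : P.mulVec (fun _ => (1 : ℝ)) = fun _ => 1)
    (hBpos : ∀ i y, 0 < B i y) (hBrow : B.mulVec (fun _ => (1 : ℝ)) = fun _ => 1)
    (hBrank : B.rank = Y)
    (π : Fin X → ℝ) (hπnn : ∀ i, 0 ≤ π i) (hπsum : ∑ i, π i = 1)
    (y yt : Fin Y) (heq : hmmT P B y π = hmmT P B yt π) :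
    y = yt := by
  by_contra hne
  set v : Fin X → ℝ := Pᵀ.mulVec π with hv
  have hX : 0 < X := by
    rcases Nat.eq_zero_or_pos X with h | h
    · subst h; simp at hπsum
    · exact h
  have hvpos : ∀ i, 0 < v i := by
    intro i
    obtain ⟨j, hj⟩ : ∃ j, 0 < π j := by
      by_contra h
      push_neg at h
      have : ∑ i, π i ≤ 0 := Finset.sum_nonpos fun i _ => h i
      rw [hπsum] at this; linarith
    have hvi : v i = ∑ j, P j i * π j := by
      simp [hv, Matrix.mulVec, dotProduct, Matrix.transpose_apply]
    rw [hvi]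
    exact Finset.sum_pos' (fun k _ => mul_nonneg (hPpos k i).le (hπnn k))
      ⟨j, Finset.mem_univ j, mul_pos (hPpos j i) hj⟩
  have hw : ∀ z : Fin Y, ∀ i, ((Matrix.diagonal (fun i => B i z) * Pᵀ).mulVec π) i
      = B i z * v i := by
    intro z i
    rw [← Matrix.mulVec_mulVec, Matrix.mulVec_diagonal]
  set s : Fin Y → ℝ := fun z => ∑ i, B i z * v i with hs
  have hspos : ∀ z : Fin Y, 0 < s z := by
    intro z
    apply Finset.sum_pos
    · intro i _; exact mul_pos (hBpos i z) (hvpos i)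
    · exact ⟨⟨0, hX⟩, Finset.mem_univ _⟩
  have hcomp : ∀ i, B i y * s yt = B i yt * s y := by
    intro i
    have h1 : (s y)⁻¹ * (B i y * v i) = (s yt)⁻¹ * (B i yt * v i) := by
      have := congrFun heq i
      simpa [hmmT, hw, hs] using this
    have hy := (hspos y).ne'
    have hyt := (hspos yt).ne'
    have hvi := (hvpos i).ne'
    field_simp at h1
    nlinarith [h1, hvpos i, sq_nonneg (B i y * s yt - B i yt * s y)]
  have hinj : Function.Injective B.mulVecLin := by
    rw [← LinearMap.ker_eq_bot]
    have hrn := LinearMap.finrank_range_add_finrank_ker B.mulVecLin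
    rw [show Module.finrank ℝ (LinearMap.range B.mulVecLin) = B.rank from rfl, hBrank,
      Module.finrank_pi, Fintype.card_fin] at hrn
    have h0 : Module.finrank ℝ (LinearMap.ker B.mulVecLin) = 0 := by omega
    exact Submodule.finrank_eq_zero.mp h0
  set c : Fin Y → ℝ :=
    fun j => s yt * (if j = y then 1 else 0) - s y * (if j = yt then 1 else 0) with hc
  have hBc : B.mulVecLin c = B.mulVecLin 0 := by
    funext i
    simp only [Matrix.mulVecLin_apply, Matrix.mulVec_zero, Matrix.mulVec, dotProduct, hc,
      Pi.zero_apply, mul_sub, Finset.sum_sub_distrib, Finset.sum_const_zero,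
      ite_mul, one_mul, zero_mul, mul_ite, mul_zero]
    rw [Finset.sum_ite_eq' Finset.univ y, Finset.sum_ite_eq' Finset.univ yt]
    simp only [Finset.mem_univ, if_true]
    linarith [hcomp i]
  have hc0 : c = 0 := hinj hBc
  have hcy : c y = 0 := by rw [hc0]; rfl
  simp [hc, hne] at hcy
  exact (hspos yt).ne' hcy
end

section
/- Let P, P̃ be invertible row-stochastic X×X matrices and B, B̃ be X×Y row-stochastic matrices with B̃ of full column rank. If P diag(b_y) = P̃ α_y diag(b̃_y) holds for all y = 1,...,Y with scalars α_y, then summing over y gives P = P̃ Σ_y α_y diag(b̃_y), and Σ_y α_y b̃_y = 𝟙, which forces α_y = 1 for all y, hence P = P̃ and B = B̃. -/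
open Matrix

/-- If `P diag(b_y) = P̃ α_y diag(b̃_y)` for all `y`, with `P`, `P̃` invertible
row-stochastic and `B`, `B̃` row-stochastic with `B̃` of full column rank, then
`P = P̃ ∑ y α_y diag(b̃_y)`, `∑ y α_y b̃_y = 𝟙`, all `α_y = 1`, and hence
`P = P̃` and `B = B̃`. -/
theorem scaled_diag_equality_forces_equal {X Y : ℕ}
    (P Pt : Matrix (Fin X) (Fin X) ℝ) (B Bt : Matrix (Fin X) (Fin Y) ℝ)
    (hProw : P.mulVec (fun _ => (1 : ℝ)) = fun _ => 1) (hPinv : IsUnit P.det)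
    (hPtrow : Pt.mulVec (fun _ => (1 : ℝ)) = fun _ => 1) (hPtinv : IsUnit Pt.det)
    (hBrow : B.mulVec (fun _ => (1 : ℝ)) = fun _ => 1)
    (hBtrow : Bt.mulVec (fun _ => (1 : ℝ)) = fun _ => 1)
    (hBtrank : Bt.rank = Y)
    (α : Fin Y → ℝ)
    (h : ∀ y, P * Matrix.diagonal (fun i => B i y) =
      Pt * (α y • Matrix.diagonal (fun i => Bt i y))) :
    P = Pt * (∑ y, α y • Matrix.diagonal (fun i => Bt i y)) ∧
      (∑ y, α y • (fun i => Bt i y)) = (fun _ => (1 : ℝ)) ∧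
      (∀ y, α y = 1) ∧ P = Pt ∧ B = Bt := by
  have hBsum : ∀ i, ∑ y, B i y = 1 := by
    intro i
    have := congrFun hBrow i
    simpa [Matrix.mulVec, dotProduct] using this
  have hBtsum : ∀ i, ∑ y, Bt i y = 1 := by
    intro i
    have := congrFun hBtrow i
    simpa [Matrix.mulVec, dotProduct] using this
  have hsumdiag : (∑ y, Matrix.diagonal (fun i => B i y)) =
      (1 : Matrix (Fin X) (Fin X) ℝ) := by
    ext i j
    simp only [Matrix.sum_apply, Matrix.diagonal_apply, Matrix.one_apply]
    by_cases hij : i = j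
    · simp [hij, hBtsum, hBsum]
    · simp [hij]
  -- Part 1
  have h1 : P = Pt * (∑ y, α y • Matrix.diagonal (fun i => Bt i y)) := by
    calc P = P * (∑ y, Matrix.diagonal (fun i => B i y)) := by
            rw [hsumdiag, Matrix.mul_one]
      _ = ∑ y, P * Matrix.diagonal (fun i => B i y) := by rw [Finset.mul_sum]
      _ = ∑ y, Pt * (α y • Matrix.diagonal (fun i => Bt i y)) := by
            exact Finset.sum_congr rfl fun y _ => h y
      _ = Pt * (∑ y, α y • Matrix.diagonal (fun i => Bt i y)) := by
            rw [Finset.mul_sum]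
  set S := ∑ y, α y • Matrix.diagonal (fun i => Bt i y) with hS
  -- S.mulVec 1 = 1
  have hSones : S.mulVec (fun _ => (1 : ℝ)) = fun _ => 1 := by
    have hP1 : Pt.mulVec (S.mulVec (fun _ => (1 : ℝ))) = fun _ => 1 := by
      rw [Matrix.mulVec_mulVec, ← h1, hProw]
    have ha := congrArg (Pt⁻¹.mulVec) hP1
    rw [Matrix.mulVec_mulVec, Matrix.nonsing_inv_mul Pt hPtinv, Matrix.one_mulVec] at ha
    have hb := congrArg (Pt⁻¹.mulVec) hPtrow
    rw [Matrix.mulVec_mulVec, Matrix.nonsing_inv_mul Pt hPtinv, Matrix.one_mulVec] at hb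
    rw [ha]; exact hb.symm
  have hSones' : ∀ i, ∑ y, α y * Bt i y = 1 := by
    intro i
    have := congrFun hSones i
    simp only [Matrix.mulVec, dotProduct, hS, Matrix.sum_apply,
      Matrix.smul_apply, Matrix.diagonal_apply, smul_eq_mul, mul_one] at this
    rw [Finset.sum_comm] at this
    simpa [Finset.mul_sum, mul_ite] using this
  -- Part 2
  have h2 : (∑ y, α y • (fun i => Bt i y)) = (fun _ => (1 : ℝ)) := by
    funext i
    have := hSones' i
    simpa [Finset.sum_apply] using this
  -- Part 3 : full column rank ⇒ injective mulVec
  have hker : LinearMap.ker Bt.mulVecLin = ⊥ := by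
    have hrn := Bt.mulVecLin.finrank_range_add_finrank_ker
    rw [Module.finrank_pi] at hrn
    have hr : Module.finrank ℝ (LinearMap.range Bt.mulVecLin) = Y := by
      simpa [Matrix.rank] using hBtrank
    have : Module.finrank ℝ (LinearMap.ker Bt.mulVecLin) = 0 := by
      simp at hrn
      omega
    exact Submodule.finrank_eq_zero.mp this
  have h3 : ∀ y, α y = 1 := by
    have hv : Bt.mulVecLin (fun y => α y - 1) = 0 := by
      funext i
      simp only [Matrix.mulVecLin_apply, Matrix.mulVec, dotProduct,
        Pi.zero_apply]
      have : ∑ y, Bt i y * (α y - 1) = (∑ y, α y * Bt i y) - ∑ y, Bt i y := by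
        rw [← Finset.sum_sub_distrib]
        congr 1; funext y; ring
      rw [this, hSones' i, hBtsum i, sub_self]
    have := (LinearMap.ker_eq_bot.mp hker) (by rw [hv, map_zero] : Bt.mulVecLin (fun y => α y - 1) = Bt.mulVecLin 0)
    intro y
    have := congrFun this y
    simpa [sub_eq_zero] using this
  -- Part 4
  have hS1 : S = 1 := by
    rw [hS]
    have : (∑ y, α y • Matrix.diagonal (fun i => Bt i y)) =
        ∑ y, Matrix.diagonal (fun i => Bt i y) := by
      exact Finset.sum_congr rfl fun y _ => by rw [h3 y, one_smul]
    rw [this]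
    ext i j
    simp only [Matrix.sum_apply, Matrix.diagonal_apply, Matrix.one_apply]
    by_cases hij : i = j
    · simp [hij, hBtsum]
    · simp [hij]
  have h4 : P = Pt := by rw [h1, hS1, Matrix.mul_one]
  -- Part 5
  have h5 : B = Bt := by
    ext i y
    have hy := h y
    rw [h3 y, one_smul, ← h4] at hy
    have := congrArg (fun M => P⁻¹ * M) hy
    simp only [← Matrix.mul_assoc, Matrix.nonsing_inv_mul P hPinv, Matrix.one_mul] at this
    have := congrFun (congrFun this i) i
    simpa [Matrix.diagonal_apply] using this
  exact ⟨h1, h2, h3, h4, h5⟩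
end
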